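/- arXiv:1710.09982 — 2 statements merged into one kernel-verified Lean document; each statement's English description precedes it below -/
import Mathlib

section
/- For every real ν > 0, the integral ∫₀^∞ (1+z²)^{-(ν+1)/2} {log(1+z²)}² dz equals {D(ν)² − 2D'(ν)}/(2√ν K(ν)), where K(ν) = Γ((ν+1)/2)/(√(πν) Γ(ν/2)), D(ν) = Ψ((ν+1)/2) − Ψ(ν/2), and D'(ν) is the derivative of D at ν. -/
/-!
The integrals `I_k(ν) = ∫₀^∞ (1+z²)^(-(ν+1)/2) log(1+z²)^k dz` satisfy `I_k' = -I_{k+1}/2`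
(differentiation under the integral sign), and the substitution `x = 1/(1+z²)` turns `I_0` into a
beta integral: `I_0(ν) = B(ν/2, 1/2)/2 = 1/(2√ν K(ν))`. Since `Γ' = Γ Ψ`, differentiating
`B(ν/2, 1/2)/2` once gives `I_1 = I_0 D` and differentiating again gives `I_2 = I_0 (D² - 2D')`.
-/

open Real MeasureTheory

/-- `K ν = Γ((ν+1)/2) / (√(πν) Γ(ν/2))`. -/
noncomputable def Kfun (ν : ℝ) : ℝ :=
  Real.Gamma ((ν + 1) / 2) / (Real.sqrt (Real.pi * ν) * Real.Gamma (ν / 2))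

/-- The digamma function `Ψ(x) = d/dx log Γ(x)`. -/
noncomputable def digamma (x : ℝ) : ℝ :=
  deriv (fun y => Real.log (Real.Gamma y)) x

/-- `D(ν) = Ψ((ν+1)/2) − Ψ(ν/2)`. -/
noncomputable def Dfun (ν : ℝ) : ℝ :=
  digamma ((ν + 1) / 2) - digamma (ν / 2)

open Set Filter Topology ProbabilityTheory

lemma integrable_one_add_sq_rpow_neg {q : ℝ} (hq : 1 / 2 < q) :
    Integrable fun z : ℝ => (1 + z ^ 2) ^ (-q) := by
  have := integrable_rpow_neg_one_add_norm_sq (E := ℝ) (μ := volume) (r := 2 * q)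
    (by rw [Module.finrank_self, Nat.cast_one]; linarith)
  simpa [sq_abs, neg_div, mul_div_cancel_left₀] using this

lemma integrable_one_add_sq_rpow_neg_mul_log_pow {q : ℝ} (hq : 1 / 2 < q) (k : ℕ) :
    Integrable fun z : ℝ => (1 + z ^ 2) ^ (-q) * log (1 + z ^ 2) ^ k := by
  set ε := (q - 1 / 2) / (k + 1)
  have hε : 0 < ε := div_pos (by linarith) (by positivity)
  have hkε : k * ε < q - 1 / 2 := by
    rw [mul_div_assoc', div_lt_iff₀ (by positivity)]; nlinarith
  refine ((integrable_one_add_sq_rpow_neg (q := q - k * ε) (by linarith)).const_mul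
    (ε⁻¹ ^ k)).mono' (by fun_prop) (Eventually.of_forall fun z => ?_)
  have hy : 0 < 1 + z ^ 2 := by positivity
  have hlog : 0 ≤ log (1 + z ^ 2) := log_nonneg (by nlinarith)
  calc ‖(1 + z ^ 2) ^ (-q) * log (1 + z ^ 2) ^ k‖
      = (1 + z ^ 2) ^ (-q) * log (1 + z ^ 2) ^ k := by
        rw [norm_eq_abs, abs_of_nonneg (by positivity)]
    _ ≤ (1 + z ^ 2) ^ (-q) * ((1 + z ^ 2) ^ ε / ε) ^ k := by
        gcongr; exact log_le_rpow_div hy.le hε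
    _ = ε⁻¹ ^ k * (1 + z ^ 2) ^ (-(q - k * ε)) := by
        rw [div_eq_mul_inv, mul_pow, ← rpow_mul_natCast hy.le,
          show -(q - k * ε) = -q + ε * k by ring, rpow_add hy]
        ring

noncomputable def logPowIntegral (k : ℕ) (ν : ℝ) : ℝ :=
  ∫ z in Ioi 0, (1 + z ^ 2) ^ (-((ν + 1) / 2)) * log (1 + z ^ 2) ^ k

lemma hasDerivAt_one_add_sq_rpow_mul_log_pow (k : ℕ) (z ν : ℝ) :
    HasDerivAt (fun ν => (1 + z ^ 2) ^ (-((ν + 1) / 2)) * log (1 + z ^ 2) ^ k)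
      (-((1 + z ^ 2) ^ (-((ν + 1) / 2)) * log (1 + z ^ 2) ^ (k + 1)) / 2) ν := by
  have hexp : HasDerivAt (fun ν : ℝ => -((ν + 1) / 2)) (-(1 / 2)) ν :=
    (((hasDerivAt_id' ν).add_const 1).div_const 2).neg
  have h := ((hasStrictDerivAt_const_rpow (by positivity : (0 : ℝ) < 1 + z ^ 2)
    (-((ν + 1) / 2))).hasDerivAt.comp ν hexp).mul_const (log (1 + z ^ 2) ^ k)
  exact h.congr_deriv (by ring)

lemma hasDerivAt_logPowIntegral (k : ℕ) {ν : ℝ} (hν : 0 < ν) :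
    HasDerivAt (logPowIntegral k) (-logPowIntegral (k + 1) ν / 2) ν := by
  obtain ⟨ε, hε, hνε⟩ : ∃ ε > 0, 0 < ν - ε := ⟨ν / 2, by linarith, by linarith⟩
  have hbound : ∀ z : ℝ, ∀ t ∈ Metric.ball ν ε,
      ‖-((1 + z ^ 2) ^ (-((t + 1) / 2)) * log (1 + z ^ 2) ^ (k + 1)) / 2‖
        ≤ (1 + z ^ 2) ^ (-((ν - ε + 1) / 2)) * log (1 + z ^ 2) ^ (k + 1) := by
    intro z t ht
    rw [Metric.mem_ball, dist_eq] at ht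
    have hlog : 0 ≤ log (1 + z ^ 2) := log_nonneg (by nlinarith)
    rw [norm_div, norm_neg, norm_eq_abs, abs_of_nonneg (by positivity), RCLike.norm_ofNat]
    refine (div_le_self (by positivity) one_le_two).trans ?_
    gcongr
    · nlinarith
    · linarith [(abs_lt.mp ht).1]
  have h := hasDerivAt_integral_of_dominated_loc_of_deriv_le (μ := volume.restrict (Ioi 0))
    (F := fun t z => (1 + z ^ 2) ^ (-((t + 1) / 2)) * log (1 + z ^ 2) ^ k)
    (Metric.ball_mem_nhds ν hε) (Eventually.of_forall fun t => by fun_prop)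
    (integrable_one_add_sq_rpow_neg_mul_log_pow (by linarith) k).integrableOn (by fun_prop)
    (ae_of_all _ hbound)
    (integrable_one_add_sq_rpow_neg_mul_log_pow (by linarith) (k + 1)).integrableOn
    (ae_of_all _ fun z t _ => hasDerivAt_one_add_sq_rpow_mul_log_pow k z t)
  unfold logPowIntegral
  simpa only [integral_div, integral_neg] using h.2

lemma integral_Ioo_rpow_mul_one_sub_rpow {a b : ℝ} (ha : 0 < a) (hb : 0 < b) :
    ∫ x in Ioo 0 1, x ^ (a - 1) * (1 - x) ^ (b - 1) = beta a b := by
  have hpdf : betaPDFReal a b = (Ioo 0 1).indicator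
      fun x => (beta a b)⁻¹ * (x ^ (a - 1) * (1 - x) ^ (b - 1)) := by
    ext x
    simp only [betaPDFReal, indicator, mem_Ioo, one_div, mul_assoc]
  have hone : ∫ x, betaPDFReal a b x = 1 := by
    rw [integral_eq_lintegral_of_nonneg_ae _ (by fun_prop)]
    · simpa [betaPDF] using congrArg ENNReal.toReal (lintegral_betaPDF_eq_one ha hb)
    · refine ae_of_all _ (hpdf ▸ indicator_nonneg fun x hx => ?_)
      exact mul_nonneg (inv_nonneg.2 (beta_pos ha hb).le)
        (mul_nonneg (rpow_nonneg hx.1.le _) (rpow_nonneg (sub_nonneg.2 hx.2.le) _))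
  rwa [hpdf, integral_indicator measurableSet_Ioo, integral_const_mul,
    inv_mul_eq_iff_eq_mul₀ (beta_pos ha hb).ne', mul_one] at hone

lemma image_inv_one_add_sq_Ioi : (fun z : ℝ => (1 + z ^ 2)⁻¹) '' Ioi 0 = Ioo 0 1 := by
  ext x
  constructor
  · rintro ⟨z, hz, rfl⟩
    exact ⟨by positivity, inv_lt_one_of_one_lt₀ (by nlinarith [mem_Ioi.mp hz])⟩
  · rintro ⟨hx0, hx1⟩
    have hx : 0 < x⁻¹ - 1 := sub_pos.2 (one_lt_inv₀ hx0 |>.2 hx1)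
    refine ⟨√(x⁻¹ - 1), sqrt_pos.2 hx, ?_⟩
    simp [sq_sqrt hx.le]

lemma injOn_inv_one_add_sq : InjOn (fun z : ℝ => (1 + z ^ 2)⁻¹) (Ioi 0) := by
  intro z hz w hw h
  simp only [inv_inj, add_right_inj] at h
  exact (pow_left_inj₀ (le_of_lt hz) (le_of_lt hw) two_ne_zero).1 h

lemma abs_deriv_inv_one_add_sq_mul_rpow {ν z : ℝ} (hz : 0 < z) :
    |-(2 * z) / (1 + z ^ 2) ^ 2|
        * ((1 + z ^ 2)⁻¹ ^ (ν / 2 - 1) * (1 - (1 + z ^ 2)⁻¹) ^ (1 / 2 - 1 : ℝ))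
      = 2 * (1 + z ^ 2) ^ (-((ν + 1) / 2)) := by
  have hy : 0 < 1 + z ^ 2 := by positivity
  have h1 : 1 - (1 + z ^ 2)⁻¹ = z ^ 2 / (1 + z ^ 2) := by field_simp; ring
  have h2 : (z ^ 2 / (1 + z ^ 2)) ^ (1 / 2 - 1 : ℝ) = z⁻¹ * (1 + z ^ 2) ^ (1 / 2 : ℝ) := by
    rw [div_rpow (by positivity) hy.le, ← rpow_natCast, ← rpow_mul hz.le]
    norm_num [rpow_neg hy.le, rpow_neg_one]
  have h3 : (1 + z ^ 2) ^ (-(ν / 2 - 1)) * (1 + z ^ 2) ^ (1 / 2 : ℝ)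
      = (1 + z ^ 2) ^ (-((ν + 1) / 2)) * (1 + z ^ 2) ^ 2 := by
    rw [← rpow_add hy, show -(ν / 2 - 1) + 1 / 2 = -((ν + 1) / 2) + 2 by ring, rpow_add hy,
      rpow_two]
  rw [h1, h2, inv_rpow hy.le, ← rpow_neg hy.le, abs_div, abs_neg, abs_of_pos (by positivity),
    abs_of_pos (by positivity)]
  calc 2 * z / (1 + z ^ 2) ^ 2
        * ((1 + z ^ 2) ^ (-(ν / 2 - 1)) * (z⁻¹ * (1 + z ^ 2) ^ (1 / 2 : ℝ)))
      = 2 * (z * z⁻¹) * ((1 + z ^ 2) ^ (-(ν / 2 - 1)) * (1 + z ^ 2) ^ (1 / 2 : ℝ))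
          / (1 + z ^ 2) ^ 2 := by ring
    _ = 2 * (1 + z ^ 2) ^ (-((ν + 1) / 2)) := by
      rw [h3, mul_inv_cancel₀ hz.ne']; field_simp

lemma logPowIntegral_zero {ν : ℝ} (hν : 0 < ν) :
    logPowIntegral 0 ν = beta (ν / 2) (1 / 2) / 2 := by
  have hderiv : ∀ z ∈ Ioi (0 : ℝ), HasDerivWithinAt (fun z : ℝ => (1 + z ^ 2)⁻¹)
      (-(2 * z) / (1 + z ^ 2) ^ 2) (Ioi 0) z := fun z _ =>
    ((((hasDerivAt_pow 2 z).const_add 1).inv (by positivity)).congr_deriv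
      (by norm_num)).hasDerivWithinAt
  have key := integral_image_eq_integral_abs_deriv_smul measurableSet_Ioi hderiv
    injOn_inv_one_add_sq fun x => x ^ (ν / 2 - 1) * (1 - x) ^ (1 / 2 - 1 : ℝ)
  simp only [smul_eq_mul] at key
  rw [image_inv_one_add_sq_Ioi, integral_Ioo_rpow_mul_one_sub_rpow (half_pos hν) one_half_pos,
    setIntegral_congr_fun measurableSet_Ioi fun z hz => abs_deriv_inv_one_add_sq_mul_rpow hz,
    integral_const_mul] at key
  simp only [logPowIntegral, pow_zero, mul_one]
  linarith

lemma ne_neg_natCast_of_pos {x : ℝ} (hx : 0 < x) (m : ℕ) : x ≠ -m := by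
  linarith [(m.cast_nonneg : (0 : ℝ) ≤ m)]

lemma Real.analyticAt_Gamma {x : ℝ} (hx : ∀ m : ℕ, x ≠ -m) : AnalyticAt ℝ Gamma x := by
  have hΓ : Gamma = fun y : ℝ => ((Complex.Gamma y)⁻¹⁻¹).re := by
    ext y; rw [inv_inv, Complex.Gamma_ofReal, Complex.ofReal_re]
  rw [hΓ]
  refine AnalyticAt.re_ofReal ((Complex.differentiable_one_div_Gamma.analyticAt _).inv ?_)
  exact inv_ne_zero (Complex.Gamma_ne_zero fun m h => hx m (by exact_mod_cast h))

lemma analyticOnNhd_log_Gamma : AnalyticOnNhd ℝ (fun y => log (Gamma y)) (Ioi 0) :=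
  fun _ hx => (analyticAt_log (Gamma_pos_of_pos hx)).comp
    (analyticAt_Gamma (ne_neg_natCast_of_pos hx))

lemma differentiableAt_digamma {x : ℝ} (hx : 0 < x) : DifferentiableAt ℝ digamma x :=
  (analyticOnNhd_log_Gamma.deriv x hx).differentiableAt

lemma hasDerivAt_Gamma {x : ℝ} (hx : ∀ m : ℕ, x ≠ -m) :
    HasDerivAt Gamma (Gamma x * digamma x) x := by
  have hd := differentiableAt_Gamma hx
  rw [digamma, deriv.log hd (Gamma_ne_zero hx), mul_div_cancel₀ _ (Gamma_ne_zero hx)]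
  exact hd.hasDerivAt

lemma hasDerivAt_beta_left {a b : ℝ} (ha : 0 < a) (hb : 0 < b) :
    HasDerivAt (fun x => beta x b) (beta a b * (digamma a - digamma (a + b))) a := by
  have hΓab := Gamma_pos_of_pos (add_pos ha hb)
  have h := ((hasDerivAt_Gamma (ne_neg_natCast_of_pos ha)).mul_const (Gamma b)).div
    ((hasDerivAt_Gamma (ne_neg_natCast_of_pos (add_pos ha hb))).comp_add_const a b) hΓab.ne'
  refine h.congr_deriv ?_
  rw [beta]
  field_simp

lemma differentiableAt_Dfun {ν : ℝ} (hν : 0 < ν) : DifferentiableAt ℝ Dfun ν :=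
  ((differentiableAt_digamma (by linarith)).comp ν (by fun_prop)).sub
    ((differentiableAt_digamma (by linarith)).comp ν (by fun_prop))

lemma hasDerivAt_beta_half_div_two {ν : ℝ} (hν : 0 < ν) :
    HasDerivAt (fun ν => beta (ν / 2) (1 / 2) / 2)
      (-(beta (ν / 2) (1 / 2) / 2 * Dfun ν / 2)) ν := by
  have h := ((hasDerivAt_beta_left (half_pos hν) one_half_pos).comp ν
    ((hasDerivAt_id ν).div_const 2)).div_const 2
  refine h.congr_deriv ?_
  rw [Dfun, show ν / 2 + 1 / 2 = (ν + 1) / 2 by ring]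
  ring

lemma logPowIntegral_one {ν : ℝ} (hν : 0 < ν) :
    logPowIntegral 1 ν = beta (ν / 2) (1 / 2) / 2 * Dfun ν := by
  have h0 : logPowIntegral 0 =ᶠ[𝓝 ν] fun ν => beta (ν / 2) (1 / 2) / 2 :=
    eventually_of_mem (Ioi_mem_nhds hν) fun _ ht => logPowIntegral_zero ht
  have h := (hasDerivAt_logPowIntegral 0 hν).unique
    ((hasDerivAt_beta_half_div_two hν).congr_of_eventuallyEq h0)
  linarith

lemma logPowIntegral_two {ν : ℝ} (hν : 0 < ν) :
    logPowIntegral 2 ν = beta (ν / 2) (1 / 2) / 2 * (Dfun ν ^ 2 - 2 * deriv Dfun ν) := by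
  have h1 : logPowIntegral 1 =ᶠ[𝓝 ν] fun ν => beta (ν / 2) (1 / 2) / 2 * Dfun ν :=
    eventually_of_mem (Ioi_mem_nhds hν) fun _ ht => logPowIntegral_one ht
  have h := (hasDerivAt_logPowIntegral 1 hν).unique
    (((hasDerivAt_beta_half_div_two hν).mul (differentiableAt_Dfun hν).hasDerivAt)
      |>.congr_of_eventuallyEq h1)
  linear_combination (-2) * h

lemma beta_half_div_two_eq_inv_Kfun {ν : ℝ} (hν : 0 < ν) :
    beta (ν / 2) (1 / 2) / 2 = (2 * √ν * Kfun ν)⁻¹ := by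
  have := Gamma_pos_of_pos (half_pos hν)
  have := Gamma_pos_of_pos (by linarith : 0 < (ν + 1) / 2)
  have := sqrt_pos.2 hν
  rw [beta, Kfun, Gamma_one_half_eq, sqrt_mul pi_pos.le, show ν / 2 + 1 / 2 = (ν + 1) / 2 by ring]
  field_simp

theorem integral_one_add_sq_rpow_mul_log_sq (ν : ℝ) (hν : 0 < ν) :
    (∫ z in Set.Ioi (0 : ℝ), (1 + z ^ 2) ^ (-((ν + 1) / 2)) * (Real.log (1 + z ^ 2)) ^ 2)
      = ((Dfun ν) ^ 2 - 2 * deriv Dfun ν) / (2 * Real.sqrt ν * Kfun ν) := by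
  change logPowIntegral 2 ν = _
  rw [logPowIntegral_two hν, beta_half_div_two_eq_inv_Kfun hν, div_eq_inv_mul]
end

section
/- The ratio √(2/x) · Γ((x+1)/2)/Γ(x/2) tends to 1 as the real number x tends to infinity. -/
open Real Filter Topology

/-!
Log-convexity of `Γ` (Bohr–Mollerup) gives `Γ(s + 1/2)² ≤ Γ(s) Γ(s + 1) = s Γ(s)²`; applied at
`s` and at `s + 1/2` this squeezes `Γ(s + 1/2)² / (s Γ(s)²)` between `s / (s + 1/2)` and `1`
(Gautschi's inequality). With `s = x / 2` the ratio in question is the square root of this quotient.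
-/

theorem tendsto_div_add_const_atTop (c : ℝ) :
    Tendsto (fun x : ℝ => x / (x + c)) atTop (𝓝 1) := by
  have h : Tendsto (fun x : ℝ => (1 + c * x⁻¹)⁻¹) atTop (𝓝 (1 + c * 0)⁻¹) :=
    (tendsto_const_nhds.add (tendsto_inv_atTop_zero.const_mul c)).inv₀ (by simp)
  rw [mul_zero, add_zero, inv_one] at h
  refine h.congr' ?_
  filter_upwards [eventually_gt_atTop 0] with x hx
  rw [← div_eq_mul_inv, one_add_div hx.ne', inv_div]

namespace Real

theorem Gamma_add_half_sq_le {s : ℝ} (hs : 0 < s) : Gamma (s + 1 / 2) ^ 2 ≤ s * Gamma s ^ 2 := by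
  have hΓ := Gamma_pos_of_pos hs
  have h := Gamma_mul_add_mul_le_rpow_Gamma_mul_rpow_Gamma hs (t := s + 1) (by positivity)
    (a := 1 / 2) (b := 1 / 2) (by norm_num) (by norm_num) (by norm_num)
  rw [Gamma_add_one hs.ne', ← mul_rpow hΓ.le (by positivity), ← sqrt_eq_rpow,
    show 1 / 2 * s + 1 / 2 * (s + 1) = s + 1 / 2 by ring] at h
  calc Gamma (s + 1 / 2) ^ 2 ≤ √(Gamma s * (s * Gamma s)) ^ 2 := by gcongr
    _ = s * Gamma s ^ 2 := by rw [sq_sqrt (by positivity)]; ring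

theorem sq_mul_Gamma_sq_le {s : ℝ} (hs : 0 < s) :
    s ^ 2 * Gamma s ^ 2 ≤ (s + 1 / 2) * Gamma (s + 1 / 2) ^ 2 := by
  have h := Gamma_add_half_sq_le (s := s + 1 / 2) (by positivity)
  rwa [add_assoc, add_halves, Gamma_add_one hs.ne', mul_pow] at h

theorem tendsto_Gamma_add_half_div_sqrt_mul_Gamma :
    Tendsto (fun s => Gamma (s + 1 / 2) / (√s * Gamma s)) atTop (𝓝 1) := by
  set q : ℝ → ℝ := fun s => Gamma (s + 1 / 2) ^ 2 / (s * Gamma s ^ 2)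
  have hq : Tendsto q atTop (𝓝 1) := by
    refine tendsto_of_tendsto_of_tendsto_of_le_of_le' (tendsto_div_add_const_atTop (1 / 2))
      tendsto_const_nhds ?_ ?_
    all_goals filter_upwards [eventually_gt_atTop 0] with s hs
    · rw [div_le_div_iff₀ (by positivity) (by positivity)]
      linarith [sq_mul_Gamma_sq_le hs]
    · exact div_le_one_of_le₀ (Gamma_add_half_sq_le hs) (by positivity)
  have hsqrt := (continuous_sqrt.tendsto 1).comp hq
  rw [sqrt_one] at hsqrt
  refine hsqrt.congr' ?_
  filter_upwards [eventually_gt_atTop 0] with s hs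
  simp only [Function.comp, q]
  rw [sqrt_div (by positivity), sqrt_mul hs.le, sqrt_sq (Gamma_pos_of_pos (by positivity)).le,
    sqrt_sq (Gamma_pos_of_pos hs).le]

end Real

theorem gamma_ratio_tendsto_one :
    Tendsto (fun x : ℝ => Real.sqrt (2 / x) * Real.Gamma ((x + 1) / 2) / Real.Gamma (x / 2))
      atTop (nhds 1) := by
  refine (Real.tendsto_Gamma_add_half_div_sqrt_mul_Gamma.comp
    (tendsto_id.atTop_div_const (by norm_num : (0 : ℝ) < 2))).congr fun x => ?_
  rw [Function.comp_apply, id, show 2 / x = (x / 2)⁻¹ by rw [inv_div], sqrt_inv, add_div]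
  ring
end
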